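/- arXiv:math/0605166 — 3 statements merged into one kernel-verified Lean document; each statement's English description precedes it below -/
import Mathlib

section
/- Let Π₁, Π₂ be partitions of ℕ. The Young subgroups 𝔖_{Π₁} and 𝔖_{Π₂} are conjugate in 𝔖_ℕ (i.e. g𝔖_{Π₁}g⁻¹ = 𝔖_{Π₂} for some finitary permutation g of ℕ) if and only if Π₁ and Π₂ are tail-equivalent. -/
/-- The infinite symmetric group `𝔖_ℕ`: the subgroup of `Equiv.Perm ℕ` consisting of
finitary permutations, i.e. bijections of `ℕ` moving only finitely many points. -/
def finitaryPerms : Subgroup (Equiv.Perm ℕ) where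
  carrier := {σ | {x | σ x ≠ x}.Finite}
  one_mem' := by simp
  mul_mem' := by
    intro a b ha hb
    refine Set.Finite.subset (ha.union hb) ?_
    intro x hx
    by_contra hmem
    simp only [Set.mem_union, Set.mem_setOf_eq, not_or, not_not] at hmem
    exact hx (by simp [Equiv.Perm.mul_apply, hmem.2, hmem.1])
  inv_mem' := by
    intro a ha
    refine Set.Finite.subset (ha.image a) ?_
    intro x hx
    refine ⟨a⁻¹ x, ?_, Equiv.apply_symm_apply a x⟩
    simp only [Set.mem_setOf_eq, Equiv.Perm.coe_inv, Equiv.apply_symm_apply]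
    exact fun h => hx h.symm

/-- The Young subgroup `𝔖_Π` associated to a partition `Π` of `ℕ`: the subgroup of finitary
permutations mapping each block of `Π` onto itself. -/
def youngSubgroup (P : Set (Set ℕ)) : Subgroup (Equiv.Perm ℕ) where
  carrier := {σ | {x | σ x ≠ x}.Finite ∧ ∀ A ∈ P, σ '' A = A}
  one_mem' := by
    constructor
    · simp
    · intro A _; simp
  mul_mem' := by
    rintro a b ⟨ha, ha'⟩ ⟨hb, hb'⟩
    constructor
    · refine Set.Finite.subset (ha.union hb) ?_
      intro x hx
      by_contra hmem
      simp only [Set.mem_union, Set.mem_setOf_eq, not_or, not_not] at hmem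
      exact hx (by simp [Equiv.Perm.mul_apply, hmem.2, hmem.1])
    · intro A hA
      have : ⇑(a * b) = ⇑a ∘ ⇑b := rfl
      rw [this, Set.image_comp, hb' A hA, ha' A hA]
  inv_mem' := by
    rintro a ⟨ha, ha'⟩
    constructor
    · refine Set.Finite.subset (ha.image a) ?_
      intro x hx
      refine ⟨a⁻¹ x, ?_, Equiv.apply_symm_apply a x⟩
      simp only [Set.mem_setOf_eq, Equiv.Perm.coe_inv, Equiv.apply_symm_apply]
      exact fun h => hx h.symm
    · intro A hA
      have := congrArg (Set.image ⇑a⁻¹) (ha' A hA)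
      rw [← Set.image_comp, (by funext x; simp : ⇑a⁻¹ ∘ ⇑a = id), Set.image_id] at this
      exact this.symm

/-!
Conjugating a Young subgroup by `g` gives the Young subgroup of the partition moved by `g`,
so only the converse needs an argument: a Young subgroup determines its partition, because the
transposition `(x y)` lies in `𝔖_Π` exactly when `x` and `y` lie in the same block of `Π`.
-/

open Equiv Set Setoid

theorem Setoid.IsPartition.image_equiv {α β : Type*} {P : Set (Set α)} (hP : IsPartition P)
    (e : α ≃ β) : IsPartition ((e '' ·) '' P) := by
  refine ⟨fun ⟨A, hA, hAe⟩ => hP.1 (image_eq_empty.1 hAe ▸ hA), fun b => ?_⟩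
  obtain ⟨A, ⟨hA, hbA⟩, hunique⟩ := hP.2 (e.symm b)
  refine ⟨e '' A, ⟨mem_image_of_mem _ hA, mem_image_equiv.2 hbA⟩, ?_⟩
  rintro _ ⟨⟨C, hC, rfl⟩, hbC⟩
  rw [hunique C ⟨hC, mem_image_equiv.1 hbC⟩]

theorem Equiv.swap_image_eq_self {α : Type*} [DecidableEq α] {A : Set α} {x y : α}
    (h : x ∈ A ↔ y ∈ A) : swap x y '' A = A := by
  ext z
  rw [mem_image_equiv, symm_swap]
  rcases eq_or_ne z x with rfl | hzx
  · simp [h]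
  rcases eq_or_ne z y with rfl | hzy
  · simp [h]
  rw [swap_apply_of_ne_of_ne hzx hzy]

theorem Equiv.finite_setOf_swap_apply_ne {α : Type*} [DecidableEq α] (x y : α) :
    {z | swap x y z ≠ z}.Finite :=
  (toFinite {x, y}).subset fun _ hz => (swap_apply_ne_self_iff.1 hz).2

namespace Equiv.Perm

variable {α : Type*} (g σ : Perm α)

theorem setOf_conj_apply_ne : {x | (g * σ * g⁻¹) x ≠ x} = g '' {x | σ x ≠ x} := by
  ext x
  rw [mem_image_equiv]
  exact not_congr g.eq_symm_apply.symm

theorem image_conj_image (A : Set α) : (g * σ * g⁻¹) '' (g '' A) = g '' (σ '' A) := by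
  simp [image_image]

end Equiv.Perm

theorem conj_mem_youngSubgroup_image_iff (g σ : Perm ℕ) (P : Set (Set ℕ)) :
    g * σ * g⁻¹ ∈ youngSubgroup ((g '' ·) '' P) ↔ σ ∈ youngSubgroup P := by
  change _ ∧ _ ↔ _ ∧ _
  rw [Perm.setOf_conj_apply_ne, finite_image_iff g.injective.injOn, forall_mem_image]
  simp only [Perm.image_conj_image, g.injective.image_injective.eq_iff]

theorem map_conj_youngSubgroup (g : Perm ℕ) (P : Set (Set ℕ)) :
    (youngSubgroup P).map (MulAut.conj g).toMonoidHom = youngSubgroup ((g '' ·) '' P) := by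
  ext τ
  rw [Subgroup.mem_map_equiv, MulAut.conj_symm_apply, ← conj_mem_youngSubgroup_image_iff g,
    show g * (g⁻¹ * τ * g) * g⁻¹ = τ by group]

theorem swap_mem_youngSubgroup_iff {P : Set (Set ℕ)} (hP : IsPartition P) (x y : ℕ) :
    swap x y ∈ youngSubgroup P ↔ ∃ A ∈ P, x ∈ A ∧ y ∈ A := by
  constructor
  · rintro ⟨-, hblocks⟩
    obtain ⟨A, ⟨hA, hxA⟩, -⟩ := hP.2 x
    refine ⟨A, hA, hxA, ?_⟩
    rw [← hblocks A hA]
    exact ⟨x, hxA, swap_apply_left x y⟩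
  · rintro ⟨A, hA, hxA, hyA⟩
    refine ⟨finite_setOf_swap_apply_ne x y, fun B hB => swap_image_eq_self ?_⟩
    constructor <;> intro h
    · rwa [eq_of_mem_eqv_class hP.2 hB h hA hxA]
    · rwa [eq_of_mem_eqv_class hP.2 hB h hA hyA]

theorem youngSubgroup_injOn : InjOn youngSubgroup {P | IsPartition P} := by
  intro P hP Q hQ h
  calc P = (mkClasses P hP.2).classes := (classes_mkClasses P hP).symm
    _ = (mkClasses Q hQ.2).classes := by
      congr 1
      ext x y
      rw [rel_iff_exists_classes, rel_iff_exists_classes, classes_mkClasses P hP,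
        classes_mkClasses Q hQ, ← swap_mem_youngSubgroup_iff hP, ← swap_mem_youngSubgroup_iff hQ,
        h]
    _ = Q := classes_mkClasses Q hQ

/-- Young subgroups `𝔖_{Π₁}` and `𝔖_{Π₂}` are conjugate in the infinite symmetric group
(i.e. by a finitary permutation) if and only if the partitions are tail-equivalent, i.e.
`Π₂` consists of the images of the blocks of `Π₁` under some finitary permutation. -/
theorem youngSubgroups_conjugate_iff_tailEquivalent
    (P₁ P₂ : Set (Set ℕ)) (h₁ : Setoid.IsPartition P₁) (h₂ : Setoid.IsPartition P₂) :
    (∃ g : Equiv.Perm ℕ, {x | g x ≠ x}.Finite ∧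
        Subgroup.map (MulAut.conj g).toMonoidHom (youngSubgroup P₁) = youngSubgroup P₂) ↔
    (∃ g : Equiv.Perm ℕ, {x | g x ≠ x}.Finite ∧ P₂ = (fun A => g '' A) '' P₁) := by
  simp only [map_conj_youngSubgroup]
  refine exists_congr fun g => and_congr_right fun _ => ⟨fun h => ?_, fun h => h ▸ rfl⟩
  exact (youngSubgroup_injOn (h₁.image_equiv g) h₂ h).symm
end

section
/- Let λ and μ be partitions of k, and let n be an integer with n ≥ k + max(λ₁, μ₁). Then K_{(n−k,μ),(n−k,λ)} = K_{μ,λ}. -/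
open scoped BigOperators

/-- The Kostka number `K_{μ,w}`: the number of semistandard Young tableaux of shape `μ` and
weight `w`, i.e. having exactly `w i` entries equal to `i` for each `i`. -/
noncomputable def kostka (μ : YoungDiagram) (w : ℕ → ℕ) : ℕ :=
  Nat.card {T : SemistandardYoungTableau μ //
    ∀ i : ℕ, (μ.cells.filter fun c => T c.1 c.2 = i).card = w i}

/-- The number of saturated chains `μ = t₀ ⊂ t₁ ⊂ ⋯ ⊂ t_m = ν` of Young diagrams in which each
`t_{i+1}` is obtained from `t_i` by adding one cell (the number of standard skew tableaux of
shape `ν/μ`). -/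
noncomputable def chainCount (μ ν : YoungDiagram) (m : ℕ) : ℕ :=
  Nat.card {t : Fin (m + 1) → YoungDiagram //
    t 0 = μ ∧ t (Fin.last m) = ν ∧
    ∀ i : Fin m, t i.castSucc ≤ t i.succ ∧ (t i.succ).card = (t i.castSucc).card + 1}

/-- `dimSYT μ` is the number of standard Young tableaux of shape `μ`: the number of saturated
chains from the empty diagram to `μ` adding one cell at a time. -/
noncomputable def dimSYT (μ : YoungDiagram) : ℕ :=
  chainCount ⊥ μ μ.card

/-- The two-row Young diagram `(a, b)` (for `b ≤ a`). -/
def twoRow (a b : ℕ) : YoungDiagram :=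
  YoungDiagram.ofRowLens [a, min a b] (by simp [List.sortedGE_iff_pairwise])

/-- The dominance order on Young diagrams: `dominates μ ν` means `μ ⊵ ν`, i.e. every partial
sum of row lengths of `μ` is at least the corresponding partial sum for `ν`. -/
def dominates (μ ν : YoungDiagram) : Prop :=
  ∀ m : ℕ, ∑ i ∈ Finset.range m, ν.rowLen i ≤ ∑ i ∈ Finset.range m, μ.rowLen i

/-!
Entries start at `0` here. Column strictness forces every entry below the first row to be
positive, so the `n - k` zeros demanded by the weight fill the first row of `(n - k, μ)`
exactly. Deleting that row and lowering every remaining entry by one is then a weight-shifting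
bijection onto the semistandard tableaux of shape `μ`.
-/

theorem YoungDiagram.mem_succ_iff_of_rowLen_succ {μ ν : YoungDiagram}
    (hν : ∀ i, ν.rowLen (i + 1) = μ.rowLen i) {i j : ℕ} : (i + 1, j) ∈ ν ↔ (i, j) ∈ μ := by
  rw [mem_iff_lt_rowLen, mem_iff_lt_rowLen, hν]

namespace SemistandardYoungTableau

variable {μ : YoungDiagram}

def entryCount (T : SemistandardYoungTableau μ) (m : ℕ) : ℕ :=
  (μ.cells.filter fun c => T c.1 c.2 = m).card

theorem entry_succ_pos (T : SemistandardYoungTableau μ) {i j : ℕ} (h : (i + 1, j) ∈ μ) :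
    0 < T (i + 1) j :=
  (Nat.zero_le _).trans_lt (T.col_strict i.succ_pos h)

theorem filter_entry_eq_zero_subset_row_zero (T : SemistandardYoungTableau μ) :
    (μ.cells.filter fun c => T c.1 c.2 = 0) ⊆ μ.row 0 := by
  rintro ⟨_ | i, j⟩ hc
  · exact YoungDiagram.mem_row_iff.mpr ⟨(Finset.mem_filter.mp hc).1, rfl⟩
  · obtain ⟨hmem, hzero⟩ := Finset.mem_filter.mp hc
    exact absurd hzero (T.entry_succ_pos hmem).ne'

theorem entryCount_zero_eq_rowLen_iff (T : SemistandardYoungTableau μ) :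
    T.entryCount 0 = μ.rowLen 0 ↔ ∀ j, (0, j) ∈ μ → T 0 j = 0 := by
  have hsub := T.filter_entry_eq_zero_subset_row_zero
  calc T.entryCount 0 = μ.rowLen 0
      ↔ (μ.cells.filter fun c => T c.1 c.2 = 0) = μ.row 0 := by
        rw [entryCount, YoungDiagram.rowLen_eq_card]
        exact ⟨fun h => Finset.eq_of_subset_of_card_le hsub h.ge, congrArg _⟩
    _ ↔ μ.row 0 ⊆ μ.cells.filter fun c => T c.1 c.2 = 0 := ⟨Eq.superset, hsub.antisymm⟩
    _ ↔ ∀ j, (0, j) ∈ μ → T 0 j = 0 := by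
        refine ⟨fun h j hj => (Finset.mem_filter.mp (h (YoungDiagram.mk_mem_row_iff.mpr hj))).2,
          fun h => ?_⟩
        rintro ⟨i, j⟩ hc
        obtain ⟨hmem, rfl : i = 0⟩ := YoungDiagram.mem_row_iff.mp hc
        exact Finset.mem_filter.mpr ⟨hmem, h j hmem⟩

section PrependRow

variable {ν : YoungDiagram} (hν : ∀ i, ν.rowLen (i + 1) = μ.rowLen i)
include hν

def consZeroRow (S : SemistandardYoungTableau μ) : SemistandardYoungTableau ν where
  entry
    | 0, _ => 0
    | i + 1, j => if (i, j) ∈ μ then S i j + 1 else 0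
  row_weak' {i j₁ j₂} hj hcell := by
    cases i with
    | zero => exact le_rfl
    | succ i =>
      have hcell := (YoungDiagram.mem_succ_iff_of_rowLen_succ hν).mp hcell
      simp only [if_pos hcell, if_pos (μ.up_left_mem le_rfl hj.le hcell)]
      exact Nat.succ_le_succ (S.row_weak hj hcell)
  col_strict' {i₁ i₂ j} hi hcell := by
    obtain ⟨i₂, rfl⟩ := Nat.exists_eq_add_one_of_ne_zero (Nat.ne_zero_of_lt hi)
    have hcell := (YoungDiagram.mem_succ_iff_of_rowLen_succ hν).mp hcell
    cases i₁ with
    | zero => simp only [if_pos hcell, Nat.succ_pos]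
    | succ i₁ =>
      have hcell₁ := μ.up_left_mem (Nat.le_of_succ_le_succ hi.le) le_rfl hcell
      simp only [if_pos hcell, if_pos hcell₁]
      exact Nat.succ_lt_succ (S.col_strict (Nat.lt_of_succ_lt_succ hi) hcell)
  zeros' {i j} h := by
    cases i with
    | zero => rfl
    | succ i => exact if_neg (mt (YoungDiagram.mem_succ_iff_of_rowLen_succ hν).mpr h)

@[simp]
theorem consZeroRow_zero (S : SemistandardYoungTableau μ) (j : ℕ) : consZeroRow hν S 0 j = 0 :=
  rfl

theorem consZeroRow_succ (S : SemistandardYoungTableau μ) {i j : ℕ} (h : (i, j) ∈ μ) :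
    consZeroRow hν S (i + 1) j = S i j + 1 :=
  if_pos h

def dropZeroRow (T : SemistandardYoungTableau ν) : SemistandardYoungTableau μ where
  entry i j := if (i, j) ∈ μ then T (i + 1) j - 1 else 0
  row_weak' {i j₁ j₂} hj hcell := by
    simp only [if_pos hcell, if_pos (μ.up_left_mem le_rfl hj.le hcell)]
    exact Nat.sub_le_sub_right
      (T.row_weak hj ((YoungDiagram.mem_succ_iff_of_rowLen_succ hν).mpr hcell)) 1
  col_strict' {i₁ i₂ j} hi hcell := by
    have hcell₁ := μ.up_left_mem hi.le le_rfl hcell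
    simp only [if_pos hcell, if_pos hcell₁]
    have hpos := T.entry_succ_pos ((YoungDiagram.mem_succ_iff_of_rowLen_succ hν).mpr hcell₁)
    have hlt := T.col_strict (Nat.add_lt_add_right hi 1)
      ((YoungDiagram.mem_succ_iff_of_rowLen_succ hν).mpr hcell)
    omega
  zeros' h := if_neg h

theorem dropZeroRow_consZeroRow (S : SemistandardYoungTableau μ) :
    dropZeroRow hν (consZeroRow hν S) = S := by
  ext i j
  by_cases h : (i, j) ∈ μ
  · exact (if_pos h).trans (by rw [consZeroRow_succ hν S h, Nat.add_sub_cancel])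
  · exact (if_neg h).trans (S.zeros h).symm

theorem consZeroRow_dropZeroRow (T : SemistandardYoungTableau ν)
    (hT : ∀ j, (0, j) ∈ ν → T 0 j = 0) : consZeroRow hν (dropZeroRow hν T) = T := by
  ext i j
  cases i with
  | zero =>
    by_cases h : (0, j) ∈ ν
    · exact (hT j h).symm
    · exact (T.zeros h).symm
  | succ i =>
    by_cases h : (i, j) ∈ μ
    · have hpos := T.entry_succ_pos ((YoungDiagram.mem_succ_iff_of_rowLen_succ hν).mpr h)
      rw [consZeroRow_succ hν _ h]
      exact (congrArg (· + 1) (if_pos h)).trans (Nat.sub_add_cancel hpos)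
    · exact (if_neg h).trans
        (T.zeros (mt (YoungDiagram.mem_succ_iff_of_rowLen_succ hν).mp h)).symm

def consZeroRowEquiv :
    SemistandardYoungTableau μ ≃
      {T : SemistandardYoungTableau ν // ∀ j, (0, j) ∈ ν → T 0 j = 0} where
  toFun S := ⟨consZeroRow hν S, fun j _ => consZeroRow_zero hν S j⟩
  invFun T := dropZeroRow hν T
  left_inv := dropZeroRow_consZeroRow hν
  right_inv T := Subtype.ext (consZeroRow_dropZeroRow hν T.1 T.2)

theorem entryCount_consZeroRow_succ (S : SemistandardYoungTableau μ) (m : ℕ) :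
    (consZeroRow hν S).entryCount (m + 1) = S.entryCount m := by
  refine Finset.card_nbij' (fun c => (c.1 - 1, c.2)) (fun c => (c.1 + 1, c.2)) ?_ ?_ ?_ ?_
  · rintro ⟨_ | i, j⟩ hc
    all_goals simp only [Finset.coe_filter, Set.mem_ofPred_eq, YoungDiagram.mem_cells] at hc ⊢
    · simp at hc
    · have h := (YoungDiagram.mem_succ_iff_of_rowLen_succ hν).mp hc.1
      rw [consZeroRow_succ hν S h] at hc
      exact ⟨h, Nat.succ_injective hc.2⟩
  · rintro ⟨i, j⟩ hc
    simp only [Finset.coe_filter, Set.mem_ofPred_eq, YoungDiagram.mem_cells] at hc ⊢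
    exact ⟨(YoungDiagram.mem_succ_iff_of_rowLen_succ hν).mpr hc.1,
      by rw [consZeroRow_succ hν S hc.1, hc.2]⟩
  · rintro ⟨_ | i, j⟩ hc
    · simp at hc
    · rfl
  · intro _ _
    rfl

end PrependRow

end SemistandardYoungTableau

open SemistandardYoungTableau

theorem kostka_eq_card_entryCount (μ : YoungDiagram) (w : ℕ → ℕ) :
    kostka μ w = Nat.card {T : SemistandardYoungTableau μ // ∀ i, T.entryCount i = w i} :=
  rfl

theorem kostka_eq_of_rowLen_succ {μ ν : YoungDiagram} (hν : ∀ i, ν.rowLen (i + 1) = μ.rowLen i)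
    (w : ℕ → ℕ) (hw : w 0 = ν.rowLen 0) :
    kostka ν w = kostka μ (fun m => w (m + 1)) := by
  rw [kostka_eq_card_entryCount, kostka_eq_card_entryCount]
  refine Nat.card_congr <| ((Equiv.subtypeEquivRight fun T => ?_).trans
      (Equiv.subtypeSubtypeEquivSubtypeInter _
        fun T => ∀ m, T.entryCount (m + 1) = w (m + 1)).symm).trans
    ((consZeroRowEquiv hν).subtypeEquiv fun S => ?_).symm
  · rw [← Nat.and_forall_add_one, hw, entryCount_zero_eq_rowLen_iff]
  · simp only [consZeroRowEquiv, Equiv.coe_fn_mk, entryCount_consZeroRow_succ]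

theorem kostka_prepend_row_general (k : ℕ) (lam mu : YoungDiagram)
    (n : ℕ)
    (mu' : YoungDiagram) (h0 : mu'.rowLen 0 = n - k)
    (hrest : ∀ i : ℕ, mu'.rowLen (i + 1) = mu.rowLen i) :
    kostka mu' (fun i => if i = 0 then n - k else lam.rowLen (i - 1)) =
      kostka mu (fun i => lam.rowLen i) :=
  kostka_eq_of_rowLen_succ hrest _ (if_pos rfl |>.trans h0.symm)

/-- For partitions `λ, μ` of `k` and `n ≥ k + max(λ₁, μ₁)`, the Kostka number of the shape
`(n-k, μ)` (first row `n-k`, remaining rows `μ`) with weight `(n-k, λ)` equals `K_{μ,λ}`.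
The shape `(n-k, μ)` is characterized by its row lengths. -/
theorem kostka_prepend_row (k : ℕ) (lam mu : YoungDiagram)
    (hlam : lam.card = k) (hmu : mu.card = k)
    (n : ℕ) (hn : k + max (lam.rowLen 0) (mu.rowLen 0) ≤ n)
    (mu' : YoungDiagram) (h0 : mu'.rowLen 0 = n - k)
    (hrest : ∀ i : ℕ, mu'.rowLen (i + 1) = mu.rowLen i) :
    kostka mu' (fun i => if i = 0 then n - k else lam.rowLen (i - 1)) =
      kostka mu (fun i => lam.rowLen i) :=
  kostka_prepend_row_general k lam mu n mu' h0 hrest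
end

section
/- Let μ be a partition of k. Then k!·dim (n−k,μ) / n^k tends to dim μ as n → ∞, where dim (n−k,μ) is the number of standard Young tableaux of shape (n−k,μ) (defined for n ≥ k + μ₁). -/
open scoped BigOperators

/-! A standard Young tableau of `(n-k, μ)` is a chain that, at each of its `n` steps, adds a cell
either to the first row or below it. Recording the `k` steps of the second kind and the standard
tableau of `μ` traced out below the first row is injective, so `dim (n-k, μ) ≤ C(n,k) dim μ`.
Conversely, once `μ₁` cells of the first row are in place, any `k` of the remaining `n - μ₁`
steps can carry a standard tableau of `μ` (the others extend the first row), so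
`C(n-μ₁,k) dim μ ≤ dim (n-k, μ)`. Both bounds are `n^k / k! · dim μ` to first order.
Both counts are instances of one bijection: chains to `μ` of length `m` that may pause
correspond to a `μ.card`-subset of the `m` steps together with a standard tableau of `μ`. -/

theorem Nat.exists_eq_of_le_of_forall_le_add_one {f : ℕ → ℕ} (hf : ∀ i, f (i + 1) ≤ f i + 1)
    {j m : ℕ} (h0 : f 0 ≤ j) (hm : j ≤ f m) : ∃ i ≤ m, f i = j := by
  induction m with
  | zero => exact ⟨0, le_rfl, by omega⟩
  | succ m ih =>
    by_cases hj : j ≤ f m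
    · obtain ⟨i, hi, rfl⟩ := ih hj
      exact ⟨i, by omega, rfl⟩
    · exact ⟨m + 1, le_rfl, by have := hf m; omega⟩

namespace Finset

theorem card_filter_lt_add_one (J : Finset ℕ) (i : ℕ) :
    #{x ∈ J | x < i + 1} = #{x ∈ J | x < i} + if i ∈ J then 1 else 0 := by
  simp only [Nat.lt_add_one_iff_lt_or_eq, filter_or]
  split_ifs with hi
  · rw [card_union_of_disjoint (disjoint_filter.mpr fun _ _ h h' => h.ne h'), filter_eq',
      if_pos hi, card_singleton]
  · rw [filter_eq', if_neg hi, union_empty, add_zero]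

theorem filter_lt_eq_self_of_subset_range {J : Finset ℕ} {m i : ℕ} (hJ : J ⊆ range m)
    (hi : m ≤ i) : {x ∈ J | x < i} = J :=
  filter_true_of_mem fun _ hx => (mem_range.mp (hJ hx)).trans_le hi

theorem exists_card_filter_lt_eq {J : Finset ℕ} {m j : ℕ} (hJ : J ⊆ range m) (hj : j ≤ #J) :
    ∃ i, #{x ∈ J | x < i} = j := by
  obtain ⟨i, -, hi⟩ := Nat.exists_eq_of_le_of_forall_le_add_one
    (f := fun i => #{x ∈ J | x < i}) (j := j) (m := m)
    (fun i => by rw [card_filter_lt_add_one]; split_ifs <;> omega) (by simp)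
    (by rwa [filter_lt_eq_self_of_subset_range hJ le_rfl])
  exact ⟨i, hi⟩

end Finset

open Finset

namespace YoungDiagram

theorem rowLen_mono {μ ν : YoungDiagram} (h : μ ≤ ν) (i : ℕ) : μ.rowLen i ≤ ν.rowLen i := by
  by_contra! hlt
  exact (mem_iff_lt_rowLen.mp (h (mem_iff_lt_rowLen.mpr hlt))).false

theorem eq_bot_of_card_eq_zero {μ : YoungDiagram} (h : μ.card = 0) : μ = ⊥ :=
  YoungDiagram.ext <| by rw [cells_bot]; exact card_eq_zero.mp h

theorem eq_of_le_of_card_le {μ ν : YoungDiagram} (h : μ ≤ ν) (hc : ν.card ≤ μ.card) : μ = ν :=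
  YoungDiagram.ext <| eq_of_subset_of_card_le (cells_subset_iff.mpr h) hc

theorem card_mono {μ ν : YoungDiagram} (h : μ ≤ ν) : μ.card ≤ ν.card :=
  card_le_card (cells_subset_iff.mpr h)

@[simp] theorem card_bot : (⊥ : YoungDiagram).card = 0 := by
  simp [YoungDiagram.card, cells_bot]

theorem ext_rowLen {μ ν : YoungDiagram} (h : ∀ i, μ.rowLen i = ν.rowLen i) : μ = ν := by
  ext ⟨i, j⟩
  simp only [mem_cells, mem_iff_lt_rowLen, h]

def tail (μ : YoungDiagram) : YoungDiagram where
  cells := μ.cells.filter fun c => (c.1 + 1, c.2) ∈ μ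
  isLowerSet := by
    rintro ⟨i, j⟩ ⟨i', j'⟩ ⟨hi, hj⟩ h
    simp only [coe_filter, mem_cells, Set.mem_ofPred_eq] at h ⊢
    exact ⟨μ.up_left_mem hi hj h.1, μ.up_left_mem (Nat.add_le_add_right hi 1) hj h.2⟩

@[simp] theorem mem_tail {μ : YoungDiagram} {i j : ℕ} : (i, j) ∈ μ.tail ↔ (i + 1, j) ∈ μ := by
  change (i, j) ∈ μ.cells.filter _ ↔ _
  simp only [mem_filter, mem_cells, and_iff_right_iff_imp]
  exact μ.up_left_mem (Nat.le_succ i) le_rfl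

theorem rowLen_tail (μ : YoungDiagram) (i : ℕ) : μ.tail.rowLen i = μ.rowLen (i + 1) :=
  eq_of_forall_lt_iff fun j => by rw [← mem_iff_lt_rowLen, ← mem_iff_lt_rowLen, mem_tail]

theorem tail_mono {μ ν : YoungDiagram} (h : μ ≤ ν) : μ.tail ≤ ν.tail := by
  rintro ⟨i, j⟩ hc
  exact mem_tail.mpr (h (mem_tail.mp hc))

@[simp] theorem tail_bot : (⊥ : YoungDiagram).tail = ⊥ :=
  le_bot_iff.mp fun _ hc => absurd (mem_tail.mp hc) (notMem_bot _)

/-- The first row is `max a (ν.rowLen 0)` long, so that `cons a ν` is a diagram for every `a`. -/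
def cons (a : ℕ) (ν : YoungDiagram) : YoungDiagram where
  cells := (range (ν.colLen 0 + 1) ×ˢ range (max a (ν.rowLen 0))).filter
    fun c => c.1 = 0 ∨ (c.1 - 1, c.2) ∈ ν
  isLowerSet := by
    rintro ⟨i, j⟩ ⟨i', j'⟩ ⟨hi, hj⟩ h
    simp only [coe_filter, mem_product, mem_range, Set.mem_ofPred_eq] at h hi hj ⊢
    refine ⟨⟨by omega, by omega⟩, ?_⟩
    rcases Nat.eq_zero_or_pos i' with h0 | hpos
    · exact Or.inl h0
    · exact Or.inr (ν.up_left_mem (Nat.sub_le_sub_right hi 1) hj (h.2.resolve_left (by omega)))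

theorem mem_cons {a : ℕ} {ν : YoungDiagram} {i j : ℕ} :
    (i, j) ∈ cons a ν ↔ j < max a (ν.rowLen 0) ∧ (i = 0 ∨ (i - 1, j) ∈ ν) := by
  change (i, j) ∈ Finset.filter _ _ ↔ _
  simp only [mem_filter, mem_product, mem_range]
  constructor
  · exact fun h => ⟨h.1.2, h.2⟩
  · rintro ⟨hj, h | h⟩
    · exact ⟨⟨by omega, hj⟩, Or.inl h⟩
    · have := mem_iff_lt_colLen.mp (ν.up_left_mem le_rfl (Nat.zero_le j) h)
      exact ⟨⟨by omega, hj⟩, Or.inr h⟩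

@[simp] theorem mem_cons_zero {a : ℕ} {ν : YoungDiagram} {j : ℕ} :
    (0, j) ∈ cons a ν ↔ j < max a (ν.rowLen 0) := by
  simp [mem_cons]

@[simp] theorem mem_cons_succ {a : ℕ} {ν : YoungDiagram} {i j : ℕ} :
    (i + 1, j) ∈ cons a ν ↔ (i, j) ∈ ν := by
  simp only [mem_cons, Nat.add_sub_cancel, Nat.add_one_ne_zero, false_or, and_iff_right_iff_imp]
  intro h
  exact lt_max_of_lt_right (mem_iff_lt_rowLen.mp (ν.up_left_mem (Nat.zero_le i) le_rfl h))

@[simp] theorem tail_cons (a : ℕ) (ν : YoungDiagram) : (cons a ν).tail = ν := by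
  ext ⟨i, j⟩
  simp

theorem rowLen_cons_zero (a : ℕ) (ν : YoungDiagram) : (cons a ν).rowLen 0 = max a (ν.rowLen 0) :=
  eq_of_forall_lt_iff fun j => by rw [← mem_iff_lt_rowLen, mem_cons_zero]

theorem rowLen_cons_succ (a : ℕ) (ν : YoungDiagram) (i : ℕ) :
    (cons a ν).rowLen (i + 1) = ν.rowLen i := by
  rw [← rowLen_tail, tail_cons]

theorem cons_rowLen_tail (μ : YoungDiagram) : cons (μ.rowLen 0) μ.tail = μ := by
  refine ext_rowLen fun i => ?_
  cases i with
  | zero => rw [rowLen_cons_zero, rowLen_tail, max_eq_left (μ.rowLen_anti 0 1 zero_le_one)]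
  | succ i => rw [rowLen_cons_succ, rowLen_tail]

theorem cons_mono {a b : ℕ} {μ ν : YoungDiagram} (hab : a ≤ b) (h : μ ≤ ν) :
    cons a μ ≤ cons b ν := by
  rintro ⟨_ | i, j⟩ hc
  · simp only [mem_cons_zero] at hc ⊢
    exact hc.trans_le (max_le_max hab (rowLen_mono h 0))
  · exact mem_cons_succ.mpr (h (mem_cons_succ.mp hc))

@[simp] theorem cons_zero_bot : cons 0 ⊥ = ⊥ :=
  le_bot_iff.mp fun c hc => by
    obtain ⟨_ | i, j⟩ := c
    · exact mem_iff_lt_rowLen.mpr (mem_cons_zero.mp hc)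
    · exact absurd (mem_cons_succ.mp hc) (notMem_bot _)

theorem card_eq_rowLen_add_card_tail (μ : YoungDiagram) :
    μ.card = μ.rowLen 0 + μ.tail.card := by
  rw [YoungDiagram.card, ← card_filter_add_card_filter_not (s := μ.cells) (fun c => c.1 = 0),
    rowLen_eq_card]
  congr 1
  refine card_nbij' (fun c => (c.1 - 1, c.2)) (fun c => (c.1 + 1, c.2)) ?_ ?_ ?_ fun _ _ => rfl
  · rintro ⟨_ | i, j⟩ h
    · simp at h
    · simpa using h
  · rintro ⟨i, j⟩ h
    simpa using h
  · rintro ⟨_ | i, j⟩ h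
    · simp at h
    · rfl

theorem card_cons (a : ℕ) (ν : YoungDiagram) :
    (cons a ν).card = max a (ν.rowLen 0) + ν.card := by
  rw [card_eq_rowLen_add_card_tail, rowLen_cons_zero, tail_cons]

/-- Saturated chains from `⊥` to `μ` are the lazy chains of length `μ.card`; a lazy chain of
length `m` is a saturated chain with `m - μ.card` pauses inserted. -/
structure IsLazyChain (μ : YoungDiagram) (m : ℕ) (L : ℕ → YoungDiagram) : Prop where
  zero : L 0 = ⊥
  eq_of_le : ∀ i, m ≤ i → L i = μ
  le_succ : ∀ i < m, L i ≤ L (i + 1)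
  card_succ_le : ∀ i < m, (L (i + 1)).card ≤ (L i).card + 1

namespace IsLazyChain

variable {μ : YoungDiagram} {m : ℕ} {L : ℕ → YoungDiagram}

theorem monotone (h : IsLazyChain μ m L) : Monotone L := by
  refine monotone_nat_of_le_succ fun i => ?_
  rcases lt_or_ge i m with hi | hi
  · exact h.le_succ i hi
  · rw [h.eq_of_le i hi, h.eq_of_le (i + 1) (by omega)]

theorem le (h : IsLazyChain μ m L) (i : ℕ) : L i ≤ μ :=
  (h.monotone (le_max_left i m)).trans (h.eq_of_le _ (le_max_right i m)).le

theorem card_le (h : IsLazyChain μ m L) (i : ℕ) : (L i).card ≤ μ.card :=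
  card_mono (h.le i)

theorem card_le_card_add (h : IsLazyChain μ m L) {i j : ℕ} (hij : i ≤ j) :
    (L j).card ≤ (L i).card + (j - i) := by
  induction j, hij using Nat.le_induction with
  | base => simp
  | succ j hij ih =>
    have hstep : (L (j + 1)).card ≤ (L j).card + 1 := by
      rcases lt_or_ge j m with hj | hj
      · exact h.card_succ_le j hj
      · rw [h.eq_of_le j hj, h.eq_of_le (j + 1) (by omega)]
        omega
    omega

theorem card_succ_le' (h : IsLazyChain μ m L) (i : ℕ) : (L (i + 1)).card ≤ (L i).card + 1 := by
  simpa using h.card_le_card_add (Nat.le_add_right i 1)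

theorem exists_card_eq (h : IsLazyChain μ m L) {j : ℕ} (hj : j ≤ μ.card) :
    ∃ i, (L i).card = j := by
  obtain ⟨i, -, hi⟩ := Nat.exists_eq_of_le_of_forall_le_add_one
    (f := fun i => (L i).card) h.card_succ_le' (j := j) (m := m)
    (by simp [h.zero]) (by rwa [h.eq_of_le m le_rfl])
  exact ⟨i, hi⟩

theorem card_filter_lt_eq_card (h : IsLazyChain μ m L) (i : ℕ) :
    #{x ∈ {j ∈ range m | (L (j + 1)).card ≠ (L j).card} | x < i} = (L i).card := by
  induction i with
  | zero => simp [h.zero]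
  | succ i ih =>
    have hmono := card_mono (h.monotone (Nat.le_add_right i 1))
    have hstep := h.card_succ_le' i
    rw [card_filter_lt_add_one, ih]
    split_ifs with hi
    · have := (mem_filter.mp hi).2
      omega
    · by_cases him : i < m
      · have : (L (i + 1)).card = (L i).card := by
          by_contra hne
          exact hi (mem_filter.mpr ⟨mem_range.mpr him, hne⟩)
        omega
      · rw [h.eq_of_le i (by omega), h.eq_of_le (i + 1) (by omega), add_zero]

theorem le_of_card_le (h : IsLazyChain μ m L) {i j : ℕ} (hc : (L i).card ≤ (L j).card) :
    L i ≤ L j := by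
  rcases le_total i j with hij | hji
  · exact h.monotone hij
  · exact (eq_of_le_of_card_le (h.monotone hji) hc).ge

theorem eq_of_card_eq (h : IsLazyChain μ m L) {i j : ℕ} (hc : (L i).card = (L j).card) :
    L i = L j :=
  le_antisymm (h.le_of_card_le hc.le) (h.le_of_card_le hc.ge)

theorem card_eq_min (h : IsLazyChain μ μ.card L) (i : ℕ) : (L i).card = min i μ.card := by
  have hi := h.card_le_card_add (Nat.zero_le i)
  rw [h.zero, card_bot] at hi
  rcases le_total i μ.card with hle | hle
  · have := h.card_le_card_add hle
    rw [h.eq_of_le _ le_rfl] at this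
    omega
  · rw [h.eq_of_le i hle, min_eq_right hle]

theorem comp (h : IsLazyChain μ m L) {n : ℕ} {f : ℕ → ℕ} (hf0 : f 0 = 0) (hf : Monotone f)
    (hf_succ : ∀ i, f (i + 1) ≤ f i + 1) (hfn : ∀ i, n ≤ i → m ≤ f i) :
    IsLazyChain μ n (L ∘ f) where
  zero := by simp [hf0, h.zero]
  eq_of_le i hi := h.eq_of_le _ (hfn i hi)
  le_succ i _ := h.monotone (hf (Nat.le_add_right i 1))
  card_succ_le i _ := by
    have := h.card_le_card_add (hf (Nat.le_add_right i 1))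
    have := hf (Nat.le_add_right i 1)
    have := hf_succ i
    simp only [Function.comp_apply]
    omega

theorem map_tail (h : IsLazyChain μ m L) : IsLazyChain μ.tail m (tail ∘ L) where
  zero := by simp [h.zero]
  eq_of_le i hi := by simp [h.eq_of_le i hi]
  le_succ i hi := tail_mono (h.le_succ i hi)
  card_succ_le i hi := by
    have := card_eq_rowLen_add_card_tail (L i)
    have := card_eq_rowLen_add_card_tail (L (i + 1))
    have := rowLen_mono (h.le_succ i hi) 0
    have := h.card_succ_le i hi
    simp only [Function.comp_apply]
    omega

end IsLazyChain

instance (μ : YoungDiagram) (m : ℕ) : Finite {L : ℕ → YoungDiagram // IsLazyChain μ m L} := by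
  refine Finite.of_injective (fun L (i : Fin (m + 1)) =>
    (⟨(L.1 i).cells, mem_powerset.mpr (cells_subset_iff.mpr (L.2.le i))⟩ : μ.cells.powerset)) ?_
  rintro ⟨L, hL⟩ ⟨L', hL'⟩ h
  refine Subtype.ext (funext fun i => ?_)
  dsimp only
  rcases le_total i m with hi | hi
  · exact YoungDiagram.ext (by simpa using congrFun h ⟨i, by omega⟩)
  · rw [hL.eq_of_le i hi, hL'.eq_of_le i hi]

theorem dimSYT_eq_card_isLazyChain (μ : YoungDiagram) :
    dimSYT μ = Nat.card {L : ℕ → YoungDiagram // IsLazyChain μ μ.card L} := by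
  set n := μ.card
  have hclamp : ∀ i (hi : i ≤ n), Fin.clamp i n = ⟨i, by omega⟩ :=
    fun i hi => Fin.ext (min_eq_left hi)
  refine Nat.card_congr
    { toFun := fun t => ⟨fun i => t.1 (Fin.clamp i n), ?_, ?_, ?_, ?_⟩
      invFun := fun L => ⟨fun i => L.1 i, L.2.zero, L.2.eq_of_le n le_rfl,
        fun i => ⟨L.2.le_succ i i.2, ?_⟩⟩
      left_inv := fun t => Subtype.ext (funext fun i => by simp [hclamp i (by omega)])
      right_inv := fun L => Subtype.ext (funext fun i => ?_) }
  · rw [hclamp 0 (Nat.zero_le n)]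
    exact t.2.1
  · intro i hi
    rw [Fin.clamp_eq_last i n hi]
    exact t.2.2.1
  · intro i hi
    rw [hclamp i hi.le, hclamp (i + 1) hi]
    exact (t.2.2.2 ⟨i, hi⟩).1
  · intro i hi
    rw [hclamp i hi.le, hclamp (i + 1) hi]
    exact (t.2.2.2 ⟨i, hi⟩).2.le
  · simp only [Fin.val_castSucc, Fin.val_succ, L.2.card_eq_min]
    omega
  · rcases le_total i n with hi | hi
    · simp [hclamp i hi]
    · simp [Fin.clamp_eq_last i n hi, L.2.eq_of_le i hi, L.2.eq_of_le n le_rfl]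

/-- `stretch J s` runs through `s`, advancing at the steps in `J` and pausing at all others. -/
def stretch {α : Type*} (J : Finset ℕ) (s : ℕ → α) (i : ℕ) : α :=
  s #{x ∈ J | x < i}

variable {μ : YoungDiagram} {m : ℕ}

theorem isLazyChain_stretch {J : Finset ℕ} {s : ℕ → YoungDiagram} {k : ℕ}
    (hs : IsLazyChain μ k s) (hJ : J ⊆ range m) (hJk : #J = k) :
    IsLazyChain μ m (stretch J s) := by
  have hstep := card_filter_lt_add_one J
  refine hs.comp (f := fun i => #{x ∈ J | x < i}) (by simp) ?_ ?_ ?_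
  · refine monotone_nat_of_le_succ fun i => ?_
    rw [hstep]
    omega
  · intro i
    rw [hstep]
    split_ifs <;> omega
  · intro i hi
    rw [filter_lt_eq_self_of_subset_range hJ hi, hJk]

theorem card_stretch {J : Finset ℕ} {s : ℕ → YoungDiagram} (hJk : #J = μ.card)
    (hs : IsLazyChain μ μ.card s) (i : ℕ) : (stretch J s i).card = #{x ∈ J | x < i} := by
  rw [stretch, hs.card_eq_min, min_eq_left (hJk ▸ card_le_card (filter_subset _ _))]

theorem eq_of_stretch_eq {J J' : Finset ℕ} {s s' : ℕ → YoungDiagram}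
    (hJ : J ⊆ range m) (hJk : #J = μ.card) (hJk' : #J' = μ.card)
    (hs : IsLazyChain μ μ.card s) (hs' : IsLazyChain μ μ.card s')
    (h : stretch J s = stretch J' s') : J = J' ∧ s = s' := by
  have hcount : ∀ i, #{x ∈ J | x < i} = #{x ∈ J' | x < i} := fun i => by
    rw [← card_stretch hJk hs, ← card_stretch hJk' hs', h]
  obtain rfl : J = J' := by
    ext i
    have := hcount (i + 1)
    rw [card_filter_lt_add_one, card_filter_lt_add_one, hcount i] at this
    split_ifs at this with hi hi' <;> simp_all
  refine ⟨rfl, funext fun j => ?_⟩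
  rcases le_total j μ.card with hj | hj
  · obtain ⟨i, hi⟩ := exists_card_filter_lt_eq hJ (hJk ▸ hj)
    have := congrFun h i
    rwa [stretch, stretch, hi] at this
  · rw [hs.eq_of_le j hj, hs'.eq_of_le j hj]

theorem exists_stretch_eq {L : ℕ → YoungDiagram} (hL : IsLazyChain μ m L) :
    ∃ J ⊆ range m, #J = μ.card ∧ ∃ s, IsLazyChain μ μ.card s ∧ stretch J s = L := by
  set J := {i ∈ range m | (L (i + 1)).card ≠ (L i).card}
  have hJ : J ⊆ range m := filter_subset _ _
  have hcount : ∀ i, #{x ∈ J | x < i} = (L i).card := hL.card_filter_lt_eq_card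
  choose g hg using fun j => hL.exists_card_eq (min_le_right j μ.card)
  refine ⟨J, hJ, ?_, L ∘ g, ⟨?_, ?_, ?_, ?_⟩, funext fun i => ?_⟩
  · rw [← filter_lt_eq_self_of_subset_range hJ le_rfl, hcount, hL.eq_of_le m le_rfl]
  · exact eq_bot_of_card_eq_zero (by simp [hg])
  · intro j hj
    exact eq_of_le_of_card_le (hL.le _) (by simp [hg, min_eq_right hj])
  · intro j _
    exact hL.le_of_card_le (by simp only [hg]; omega)
  · intro j _
    simp only [Function.comp_apply, hg]
    omega
  · exact hL.eq_of_card_eq (by simp [hg, hcount, hL.card_le i])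

theorem card_isLazyChain (μ : YoungDiagram) (m : ℕ) :
    Nat.card {L : ℕ → YoungDiagram // IsLazyChain μ m L} = m.choose μ.card * dimSYT μ := by
  have hchoose : m.choose μ.card = Nat.card (powersetCard μ.card (range m)) := by
    rw [Nat.card_eq_finsetCard, card_powersetCard, card_range]
  rw [dimSYT_eq_card_isLazyChain, hchoose, ← Nat.card_prod]
  symm
  refine Nat.card_eq_of_bijective
    (fun p => ⟨stretch p.1.1 p.2.1, isLazyChain_stretch p.2.2
      (mem_powersetCard.mp p.1.2).1 (mem_powersetCard.mp p.1.2).2⟩) ⟨?_, ?_⟩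
  · rintro ⟨⟨J, hJ⟩, ⟨s, hs⟩⟩ ⟨⟨J', hJ'⟩, ⟨s', hs'⟩⟩ h
    rw [mem_powersetCard] at hJ hJ'
    obtain ⟨rfl, rfl⟩ := eq_of_stretch_eq hJ.1 hJ.2 hJ'.2 hs hs' (congrArg Subtype.val h)
    rfl
  · rintro ⟨L, hL⟩
    obtain ⟨J, hJ, hJk, s, hs, rfl⟩ := exists_stretch_eq hL
    exact ⟨⟨⟨J, mem_powersetCard.mpr ⟨hJ, hJk⟩⟩, ⟨s, hs⟩⟩, rfl⟩

theorem dimSYT_le_choose_mul_dimSYT_tail (ν : YoungDiagram) :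
    dimSYT ν ≤ ν.card.choose ν.tail.card * dimSYT ν.tail := by
  rw [← card_isLazyChain, dimSYT_eq_card_isLazyChain]
  refine Nat.card_le_card_of_injective (fun L => ⟨tail ∘ L.1, L.2.map_tail⟩) ?_
  rintro ⟨L, hL⟩ ⟨L', hL'⟩ h
  have htail : ∀ i, (L i).tail = (L' i).tail := congrFun (congrArg Subtype.val h)
  refine Subtype.ext (funext fun i => ?_)
  dsimp only
  have hrowLen : (L i).rowLen 0 = (L' i).rowLen 0 := by
    have := card_eq_rowLen_add_card_tail (L i)
    have := card_eq_rowLen_add_card_tail (L' i)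
    have := (hL.card_eq_min i).trans (hL'.card_eq_min i).symm
    rw [htail i] at *
    omega
  rw [← cons_rowLen_tail (L i), ← cons_rowLen_tail (L' i), hrowLen, htail i]

/-- Prepend a first row to the lazy chain `s`: fill that row up to `μ.rowLen 0`, then follow `s`
below it, adding a cell to the first row whenever `s` pauses. -/
theorem IsLazyChain.cons {μ : YoungDiagram} {ℓ : ℕ} {s : ℕ → YoungDiagram}
    (hs : IsLazyChain μ ℓ s) :
    IsLazyChain (cons (μ.rowLen 0 + ℓ - μ.card) μ) (μ.rowLen 0 + ℓ)
      (fun i => YoungDiagram.cons (min i (μ.rowLen 0 + ℓ) - (s (i - μ.rowLen 0)).card)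
        (s (i - μ.rowLen 0))) := by
  set r := μ.rowLen 0
  set n := r + ℓ
  have hℓ : μ.card ≤ ℓ := by
    simpa [hs.zero, hs.eq_of_le ℓ le_rfl] using hs.card_le_card_add (Nat.zero_le ℓ)
  have hrowLen : ∀ i, (s (i - r)).rowLen 0 ≤ min i n - (s (i - r)).card ∧
      (s (i - r)).card ≤ min i n := fun i => by
    have := card_eq_rowLen_add_card_tail (s (i - r))
    have := rowLen_mono (hs.le (i - r)) 0
    have := hs.card_le (i - r)
    have := hs.card_le_card_add (Nat.zero_le (i - r))
    rw [hs.zero, card_bot] at this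
    omega
  have hcard : ∀ i, (YoungDiagram.cons (min i n - (s (i - r)).card) (s (i - r))).card = min i n :=
    fun i => by
      rw [card_cons, max_eq_left (hrowLen i).1]
      exact Nat.sub_add_cancel (hrowLen i).2
  refine ⟨?_, ?_, ?_, ?_⟩
  · simp [hs.zero]
  · intro i hi
    simp only [min_eq_right hi, hs.eq_of_le (i - r) (by omega)]
  · intro i hi
    have := hs.card_le_card_add (Nat.sub_le_sub_right (Nat.le_add_right i 1) r)
    refine cons_mono ?_ (hs.monotone (by omega))
    omega
  · intro i hi
    rw [hcard, hcard]
    omega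

theorem choose_mul_dimSYT_le_dimSYT_cons (μ : YoungDiagram) {ℓ : ℕ} (hℓ : μ.card ≤ ℓ) :
    ℓ.choose μ.card * dimSYT μ ≤ dimSYT (cons (μ.rowLen 0 + ℓ - μ.card) μ) := by
  have hcard : (cons (μ.rowLen 0 + ℓ - μ.card) μ).card = μ.rowLen 0 + ℓ := by
    rw [card_cons, max_eq_left (by omega)]
    omega
  rw [← card_isLazyChain, dimSYT_eq_card_isLazyChain, hcard]
  refine Nat.card_le_card_of_injective (fun s => ⟨_, s.2.cons⟩) ?_
  rintro ⟨s, hs⟩ ⟨s', hs'⟩ h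
  refine Subtype.ext (funext fun j => ?_)
  simpa using congrArg tail (congrFun (congrArg Subtype.val h) (j + μ.rowLen 0))

theorem choose_mul_dimSYT_le_dimSYT_cons_le (μ : YoungDiagram) {n : ℕ}
    (hn : μ.card + μ.rowLen 0 ≤ n) :
    (n - μ.rowLen 0).choose μ.card * dimSYT μ ≤ dimSYT (cons (n - μ.card) μ) ∧
      dimSYT (cons (n - μ.card) μ) ≤ n.choose μ.card * dimSYT μ := by
  constructor
  · have := choose_mul_dimSYT_le_dimSYT_cons μ (ℓ := n - μ.rowLen 0) (by omega)
    rwa [show μ.rowLen 0 + (n - μ.rowLen 0) - μ.card = n - μ.card by omega] at this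
  · have := dimSYT_le_choose_mul_dimSYT_tail (cons (n - μ.card) μ)
    rwa [tail_cons, card_cons, max_eq_left (by omega), Nat.sub_add_cancel (by omega)] at this

end YoungDiagram

open Filter Topology Asymptotics
open scoped Nat

theorem tendsto_factorial_mul_choose_sub_div_pow (a k : ℕ) :
    Tendsto (fun n : ℕ => (k ! : ℝ) * ((n - a).choose k : ℝ) / (n : ℝ) ^ k) atTop (𝓝 1) := by
  have hsub : (fun n : ℕ => ((n - a : ℕ) : ℝ)) ~[atTop] (fun n : ℕ => (n : ℝ)) := by
    refine isEquivalent_of_tendsto_one ?_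
    have h := (tendsto_const_div_atTop_nhds_zero_nat (a : ℝ)).const_sub 1
    rw [sub_zero] at h
    refine h.congr' ?_
    filter_upwards [eventually_gt_atTop a] with n hn
    have : (n : ℝ) ≠ 0 := by exact_mod_cast (Nat.zero_lt_of_lt hn).ne'
    simp only [Pi.div_apply]
    rw [Nat.cast_sub hn.le]
    field_simp
  have hdesc := ((isEquivalent_descFactorial k).comp_tendsto (tendsto_sub_atTop_nat a)).trans
    (hsub.pow k)
  have hz : ∀ᶠ n : ℕ in atTop, ((n : ℝ) ^ k) ≠ 0 :=
    (eventually_gt_atTop 0).mono fun n hn => by positivity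
  refine ((isEquivalent_iff_tendsto_one hz).mp hdesc).congr fun n => ?_
  simp [Nat.descFactorial_eq_factorial_mul_choose]

theorem tendsto_factorial_mul_div_pow_of_choose_mul_le {f : ℕ → ℕ} {a k D : ℕ}
    (hf : ∀ᶠ n in atTop, (n - a).choose k * D ≤ f n ∧ f n ≤ n.choose k * D) :
    Tendsto (fun n : ℕ => (k ! : ℝ) * f n / (n : ℝ) ^ k) atTop (𝓝 D) := by
  have hlower := (tendsto_factorial_mul_choose_sub_div_pow a k).mul_const (D : ℝ)
  have hupper := (tendsto_factorial_mul_choose_sub_div_pow 0 k).mul_const (D : ℝ)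
  rw [one_mul] at hlower hupper
  refine tendsto_of_tendsto_of_tendsto_of_le_of_le' hlower hupper ?_ ?_ <;>
    filter_upwards [hf] with n hn
  · rw [div_mul_eq_mul_div, mul_assoc]
    gcongr
    exact_mod_cast hn.1
  · rw [div_mul_eq_mul_div, mul_assoc, Nat.sub_zero]
    gcongr
    exact_mod_cast hn.2

open YoungDiagram

/-- For a partition `μ` of `k`, the quantity `k! · dim (n-k, μ) / n^k` tends to `dim μ` as
`n → ∞`, where `dim (n-k, μ)` (defined for `n ≥ k + μ₁`) is the number of standard Young
tableaux of the shape with first row `n-k` and remaining rows `μ`, here encoded by any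
function `d` agreeing with it for all `n ≥ k + μ₁`. -/
theorem dim_prepend_row_asymptotics (k : ℕ) (mu : YoungDiagram) (hmu : mu.card = k)
    (d : ℕ → ℕ)
    (hd : ∀ n : ℕ, k + mu.rowLen 0 ≤ n → ∀ mu' : YoungDiagram,
      mu'.rowLen 0 = n - k → (∀ i : ℕ, mu'.rowLen (i + 1) = mu.rowLen i) →
      d n = dimSYT mu') :
    Filter.Tendsto (fun n : ℕ => (k.factorial : ℝ) * (d n : ℝ) / (n : ℝ) ^ k)
      Filter.atTop (nhds (dimSYT mu : ℝ)) := by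
  refine tendsto_factorial_mul_div_pow_of_choose_mul_le (a := mu.rowLen 0) ?_
  filter_upwards [eventually_ge_atTop (k + mu.rowLen 0)] with n hn
  have hrowLen : (cons (n - k) mu).rowLen 0 = n - k := by
    rw [rowLen_cons_zero, max_eq_left (by omega)]
  rw [hd n hn _ hrowLen (rowLen_cons_succ _ _), ← hmu]
  exact choose_mul_dimSYT_le_dimSYT_cons_le mu (by omega)
end
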